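/- arXiv:1504.04047 — 3 statements merged into one kernel-verified Lean document; each statement's English description precedes it below -/
import Mathlib

section
/- Let α ∈ (0, 1), λ = (1−α)/(1+α), M > 0, and let g : ℝ → ℝ be bounded with g(t) = 0 for all t ∉ [0, 2M]. Let f be the causal solution of the delay equation, f(t) = (2/(1+α)) Σ_{j=0}^{∞} (−λ)^j g(t − 2j). Then there is a constant C > 0 (depending only on M and λ) such that for all t ≥ 0, |f(t)| ≤ C · λ^{t/2} · sup_{s∈ℝ} |g(s)|. In particular f decays exponentially in t at rate determined by λ = (1−α)/(1+α). -/
/-!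
Only the terms with `t - 2j ≤ 2M`, i.e. `j ≥ (t - 2M)/2`, survive in the series for `f t`, so the
series is bounded by the geometric tail `λ^((t - 2M)/2) · sup |g| / (1 - λ)`. Since
`1 - λ = 2α/(1 + α)`, this gives `|f t| ≤ (λ^(-M)/α) · λ^(t/2) · sup |g|`.
-/

theorem norm_tsum_le_geometric_tail {E : Type*} [NormedAddCommGroup E] [CompleteSpace E]
    {h : ℕ → E} {r S : ℝ} {n : ℕ} (hr0 : 0 ≤ r) (hr1 : r < 1)
    (h_zero : ∀ j < n, h j = 0) (h_bound : ∀ j, ‖h j‖ ≤ r ^ j * S) :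
    ‖∑' j, h j‖ ≤ r ^ n * S / (1 - r) := by
  have h_summable : Summable h :=
    .of_norm_bounded ((summable_geometric_of_lt_one hr0 hr1).mul_right S) h_bound
  have h_shift : HasSum (fun k => h (k + n)) (∑' j, h j) := by
    rw [hasSum_nat_add_iff, Finset.sum_eq_zero fun j hj => h_zero j (Finset.mem_range.mp hj),
      add_zero]
    exact h_summable.hasSum
  have h_tail : HasSum (fun k => r ^ n * S * r ^ k) (r ^ n * S * (1 - r)⁻¹) :=
    (hasSum_geometric_of_lt_one hr0 hr1).mul_left _
  refine (h_shift.norm_le_of_bounded h_tail fun k => ?_).trans_eq (div_eq_mul_inv _ _).symm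
  calc ‖h (k + n)‖ ≤ r ^ (k + n) * S := h_bound _
    _ = r ^ n * S * r ^ k := by ring

theorem Real.pow_natCeil_le_rpow {r : ℝ} (hr0 : 0 < r) (hr1 : r ≤ 1) (x : ℝ) :
    r ^ ⌈x⌉₊ ≤ r ^ x := by
  rw [← Real.rpow_natCast]
  exact Real.rpow_le_rpow_of_exponent_ge hr0 hr1 (Nat.le_ceil x)

theorem delay_equation_exponential_decay_general
    (α : ℝ) (hα : α ∈ Set.Ioo (0 : ℝ) 1)
    (lam : ℝ) (hlam : lam = (1 - α) / (1 + α))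
    (M : ℝ)
    (g : ℝ → ℝ) (hg_bdd : ∃ B, ∀ s : ℝ, |g s| ≤ B)
    (hg_supp : ∀ t : ℝ, t ∉ Set.Icc (0 : ℝ) (2 * M) → g t = 0)
    (f : ℝ → ℝ)
    (hf : ∀ t : ℝ, f t = (2 / (1 + α)) * ∑' j : ℕ, (-lam) ^ j * g (t - 2 * j)) :
    ∃ C > (0 : ℝ), ∀ t ≥ (0 : ℝ),
      |f t| ≤ C * Real.rpow lam (t / 2) * ⨆ s : ℝ, |g s| := by
  obtain ⟨hα0, hα1⟩ := hα
  obtain ⟨B, hB⟩ := hg_bdd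
  set S := ⨆ s : ℝ, |g s|
  have hS : ∀ s, |g s| ≤ S := le_ciSup ⟨B, by rintro _ ⟨s, rfl⟩; exact hB s⟩
  have hlam0 : 0 < lam := by rw [hlam]; exact div_pos (by linarith) (by linarith)
  have hlam1 : lam < 1 := by rw [hlam, div_lt_one (by linarith)]; linarith
  refine ⟨lam ^ (-M) / α, by positivity, fun t _ => ?_⟩
  have h_zero : ∀ j < ⌈(t - 2 * M) / 2⌉₊, (-lam) ^ j * g (t - 2 * j) = 0 := fun j hj => by
    have : (j : ℝ) < (t - 2 * M) / 2 := Nat.lt_ceil.mp hj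
    rw [hg_supp _ fun hmem => by linarith [hmem.2], mul_zero]
  have h_bound : ∀ j : ℕ, ‖(-lam) ^ j * g (t - 2 * j)‖ ≤ lam ^ j * S := fun j => by
    rw [Real.norm_eq_abs, abs_mul, abs_pow, abs_neg, abs_of_pos hlam0]
    exact mul_le_mul_of_nonneg_left (hS _) (by positivity)
  have h_tail := norm_tsum_le_geometric_tail hlam0.le hlam1 h_zero h_bound
  rw [Real.norm_eq_abs] at h_tail
  have hS0 : 0 ≤ S := (abs_nonneg _).trans (hS 0)
  calc |f t| = 2 / (1 + α) * |∑' j : ℕ, (-lam) ^ j * g (t - 2 * j)| := by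
        rw [hf, abs_mul, abs_of_pos (by positivity)]
    _ ≤ 2 / (1 + α) * (lam ^ ⌈(t - 2 * M) / 2⌉₊ * S / (1 - lam)) := by gcongr
    _ ≤ 2 / (1 + α) * (lam ^ ((t - 2 * M) / 2) * S / (1 - lam)) := by
        have h_ceil := Real.pow_natCeil_le_rpow hlam0 hlam1.le ((t - 2 * M) / 2)
        have h_gap_pos : 0 < 1 - lam := by linarith
        gcongr
    _ = lam ^ (-M) / α * Real.rpow lam (t / 2) * S := by
        have h_gap : 1 - lam = 2 * α / (1 + α) := by rw [hlam]; field_simp; ring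
        rw [Real.rpow_eq_pow, show (t - 2 * M) / 2 = -M + t / 2 by ring, Real.rpow_add hlam0,
          h_gap]
        field_simp

theorem delay_equation_exponential_decay
    (α : ℝ) (hα : α ∈ Set.Ioo (0 : ℝ) 1)
    (lam : ℝ) (hlam : lam = (1 - α) / (1 + α))
    (M : ℝ) (hM : 0 < M)
    (g : ℝ → ℝ) (hg_bdd : ∃ B, ∀ s : ℝ, |g s| ≤ B)
    (hg_supp : ∀ t : ℝ, t ∉ Set.Icc (0 : ℝ) (2 * M) → g t = 0)
    (f : ℝ → ℝ)
    (hf : ∀ t : ℝ, f t = (2 / (1 + α)) * ∑' j : ℕ, (-lam) ^ j * g (t - 2 * j)) :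
    ∃ C > (0 : ℝ), ∀ t ≥ (0 : ℝ),
      |f t| ≤ C * Real.rpow lam (t / 2) * ⨆ s : ℝ, |g s| :=
  delay_equation_exponential_decay_general α hα lam hlam M g hg_bdd hg_supp f hf
end

section
/- Let α ∈ ℝ and let f : ℝ → ℝ be measurable with f(t) = 0 for t < 0. Let τ > 0 be a real number such that ∫_0^∞ e^{−τt} |f(t)| dt < ∞. Then ∫_0^∞ e^{−τt} [ ((1+α)/2) f(t) + ((1−α)/2) f(t−2) − (1/2) ∫_{t−2}^t f(u) du ] dt = γ_0^α(τ) · ∫_0^∞ e^{−τt} f(t) dt, where γ_0^α(τ) = (1/2)[ 1 + e^{−2τ} + (α − 1/τ)(1 − e^{−2τ}) ]. -/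
/-!
Weighted by `e^{-τt}`, the Laplace transform of a function vanishing on `(-∞, 0)` is an integral
over the whole line, where translation invariance gives `ℒ(f(· - c)) = e^{-τc} ℒf` and the
multiplicativity of `e^{-τt}` turns convolution into a product, `ℒ(k ⋆ f) = ℒk · ℒf`. The memory
term `∫_{t-2}^t f` is `f` convolved with the indicator of `(0, 2]`, whose transform is
`(1 - e^{-2τ}) / τ`; adding up the three terms of the operator gives the symbol.
-/

open MeasureTheory

noncomputable section

open Set Real ContinuousLinearMap
open scoped Convolution

def laplace (f : ℝ → ℝ) (τ : ℝ) : ℝ := ∫ t in Ioi 0, exp (-τ * t) * f t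

def LaplaceIntegrable (f : ℝ → ℝ) (τ : ℝ) : Prop :=
  IntegrableOn (fun t => exp (-τ * t) * f t) (Ioi 0)

section Causal

variable {E : Type*} [NormedAddCommGroup E] {g : ℝ → E}

theorem integrableOn_Ioi_zero_iff_of_forall_neg_eq_zero (hg : ∀ t < 0, g t = 0) :
    IntegrableOn g (Ioi 0) ↔ Integrable g := by
  rw [← integrableOn_Ici_iff_integrableOn_Ioi]
  exact integrableOn_iff_integrable_of_support_subset fun t ht => not_lt.1 fun h => ht (hg t h)

theorem setIntegral_Ioi_zero_eq_integral_of_forall_neg_eq_zero [NormedSpace ℝ E]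
    (hg : ∀ t < 0, g t = 0) : ∫ t in Ioi 0, g t = ∫ t, g t := by
  rw [← integral_Ici_eq_integral_Ioi]
  exact setIntegral_eq_integral_of_forall_compl_eq_zero fun t ht => hg t (not_le.1 ht)

end Causal

section Laplace

variable {f g k : ℝ → ℝ} {τ c : ℝ}

theorem laplaceIntegrable_iff_integrable (hf : ∀ t < 0, f t = 0) :
    LaplaceIntegrable f τ ↔ Integrable fun t => exp (-τ * t) * f t :=
  integrableOn_Ioi_zero_iff_of_forall_neg_eq_zero fun t ht => by rw [hf t ht, mul_zero]

theorem laplace_eq_integral (hf : ∀ t < 0, f t = 0) :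
    laplace f τ = ∫ t, exp (-τ * t) * f t :=
  setIntegral_Ioi_zero_eq_integral_of_forall_neg_eq_zero fun t ht => by rw [hf t ht, mul_zero]

theorem laplaceIntegrable_of_lintegral_lt_top
    (hf : AEStronglyMeasurable f (volume.restrict (Ioi 0)))
    (h : ∫⁻ t in Ioi 0, ENNReal.ofReal (exp (-τ * t) * |f t|) < ⊤) :
    LaplaceIntegrable f τ := by
  refine ⟨(continuous_exp.comp (continuous_const.mul continuous_id)).aestronglyMeasurable.mul hf,
    ?_⟩
  rw [hasFiniteIntegral_iff_norm]
  simpa only [norm_mul, norm_eq_abs, abs_of_pos (exp_pos _)] using h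

theorem LaplaceIntegrable.const_mul (hf : LaplaceIntegrable f τ) (a : ℝ) :
    LaplaceIntegrable (fun t => a * f t) τ :=
  (Integrable.const_mul hf a).congr (ae_of_all _ fun t => by ring)

theorem LaplaceIntegrable.add (hf : LaplaceIntegrable f τ) (hg : LaplaceIntegrable g τ) :
    LaplaceIntegrable (fun t => f t + g t) τ :=
  (Integrable.add hf hg).congr (ae_of_all _ fun _ => (mul_add _ _ _).symm)

theorem laplace_const_mul (a : ℝ) : laplace (fun t => a * f t) τ = a * laplace f τ := by
  rw [laplace, laplace, ← integral_const_mul]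
  congr 1 with t
  ring

theorem laplace_add (hf : LaplaceIntegrable f τ) (hg : LaplaceIntegrable g τ) :
    laplace (fun t => f t + g t) τ = laplace f τ + laplace g τ := by
  rw [laplace, laplace, laplace, ← integral_add hf hg]
  congr 1 with t
  ring

theorem laplace_sub (hf : LaplaceIntegrable f τ) (hg : LaplaceIntegrable g τ) :
    laplace (fun t => f t - g t) τ = laplace f τ - laplace g τ := by
  rw [laplace, laplace, laplace, ← integral_sub hf hg]
  congr 1 with t
  ring

theorem forall_neg_comp_sub_eq_zero (hf : ∀ t < 0, f t = 0) (hc : 0 ≤ c) :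
    ∀ t < 0, f (t - c) = 0 :=
  fun t ht => hf _ (by linarith)

theorem exp_mul_comp_sub (t : ℝ) :
    exp (-τ * t) * f (t - c) = exp (-τ * c) * (exp (-τ * (t - c)) * f (t - c)) := by
  rw [show -τ * t = -τ * c + -τ * (t - c) by ring, exp_add]
  ring

theorem LaplaceIntegrable.comp_sub (hf : LaplaceIntegrable f τ) (hf0 : ∀ t < 0, f t = 0)
    (hc : 0 ≤ c) : LaplaceIntegrable (fun t => f (t - c)) τ := by
  rw [laplaceIntegrable_iff_integrable (forall_neg_comp_sub_eq_zero hf0 hc)]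
  simp_rw [exp_mul_comp_sub]
  exact (((laplaceIntegrable_iff_integrable hf0).1 hf).comp_sub_right c).const_mul _

theorem laplace_comp_sub (hf : ∀ t < 0, f t = 0) (hc : 0 ≤ c) :
    laplace (fun t => f (t - c)) τ = exp (-τ * c) * laplace f τ := by
  rw [laplace_eq_integral (forall_neg_comp_sub_eq_zero hf hc), laplace_eq_integral hf]
  simp_rw [exp_mul_comp_sub]
  rw [integral_const_mul, integral_sub_right_eq_self (fun s => exp (-τ * s) * f s) c]

theorem forall_neg_convolution_eq_zero (hk : ∀ t < 0, k t = 0) (hf : ∀ t < 0, f t = 0) :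
    ∀ t < 0, (k ⋆[mul ℝ ℝ] f) t = 0 := by
  intro t ht
  rw [convolution_def, ← integral_zero ℝ ℝ]
  congr 1 with v
  rw [mul_apply']
  rcases lt_or_ge v 0 with hv | hv
  · rw [hk v hv, zero_mul]
  · rw [hf (t - v) (by linarith), mul_zero]

theorem exp_mul_convolution (t : ℝ) :
    exp (-τ * t) * (k ⋆[mul ℝ ℝ] f) t
      = ((fun v => exp (-τ * v) * k v) ⋆[mul ℝ ℝ] fun s => exp (-τ * s) * f s) t := by
  simp only [convolution_def, mul_apply', ← integral_const_mul]
  congr 1 with v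
  rw [show -τ * t = -τ * v + -τ * (t - v) by ring, exp_add]
  ring

theorem LaplaceIntegrable.convolution (hk : LaplaceIntegrable k τ) (hf : LaplaceIntegrable f τ)
    (hk0 : ∀ t < 0, k t = 0) (hf0 : ∀ t < 0, f t = 0) :
    LaplaceIntegrable (k ⋆[mul ℝ ℝ] f) τ := by
  rw [laplaceIntegrable_iff_integrable (forall_neg_convolution_eq_zero hk0 hf0)]
  simp_rw [exp_mul_convolution]
  exact ((laplaceIntegrable_iff_integrable hk0).1 hk).integrable_convolution _
    ((laplaceIntegrable_iff_integrable hf0).1 hf)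

theorem laplace_convolution (hk : LaplaceIntegrable k τ) (hf : LaplaceIntegrable f τ)
    (hk0 : ∀ t < 0, k t = 0) (hf0 : ∀ t < 0, f t = 0) :
    laplace (k ⋆[mul ℝ ℝ] f) τ = laplace k τ * laplace f τ := by
  rw [laplace_eq_integral (forall_neg_convolution_eq_zero hk0 hf0), laplace_eq_integral hk0,
    laplace_eq_integral hf0]
  simp_rw [exp_mul_convolution]
  exact integral_convolution _ ((laplaceIntegrable_iff_integrable hk0).1 hk)
    ((laplaceIntegrable_iff_integrable hf0).1 hf)

theorem indicator_one_mul_eq_indicator (s : Set ℝ) (g : ℝ → ℝ) (v : ℝ) :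
    s.indicator 1 v * g v = s.indicator g v := by
  by_cases hv : v ∈ s <;> simp [hv]

theorem convolution_indicator_Ioc (hc : 0 ≤ c) (t : ℝ) :
    ((Ioc 0 c).indicator 1 ⋆[mul ℝ ℝ] f) t = ∫ u in t - c..t, f u := by
  simp only [convolution_def, mul_apply', indicator_one_mul_eq_indicator _ fun v => f (t - v)]
  rw [integral_indicator measurableSet_Ioc, ← intervalIntegral.integral_of_le hc,
    intervalIntegral.integral_comp_sub_left, sub_zero]

theorem laplaceIntegrable_indicator_Ioc : LaplaceIntegrable ((Ioc 0 c).indicator 1) τ := by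
  simp only [LaplaceIntegrable, mul_comm (exp _),
    indicator_one_mul_eq_indicator _ fun t => exp (-τ * t)]
  exact ((integrable_indicator_iff measurableSet_Ioc).2
    (by fun_prop : Continuous fun t => exp (-τ * t)).integrableOn_Ioc).integrableOn

theorem laplace_indicator_Ioc (hτ : τ ≠ 0) (hc : 0 ≤ c) :
    laplace ((Ioc 0 c).indicator 1) τ = (1 - exp (-τ * c)) / τ := by
  simp only [laplace, mul_comm (exp _),
    indicator_one_mul_eq_indicator _ fun t => exp (-τ * t)]
  rw [setIntegral_indicator measurableSet_Ioc, inter_eq_right.2 Ioc_subset_Ioi_self,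
    ← intervalIntegral.integral_of_le hc,
    intervalIntegral.integral_comp_mul_left _ (neg_ne_zero.2 hτ), integral_exp, mul_zero, exp_zero,
    smul_eq_mul]
  field_simp
  ring

end Laplace

theorem mode_zero_laplace_multiplier
    (α : ℝ) (f : ℝ → ℝ) (hf_meas : Measurable f)
    (hf0 : ∀ t < (0 : ℝ), f t = 0)
    (τ : ℝ) (hτ : 0 < τ)
    (hf_int : (∫⁻ t in Set.Ioi (0 : ℝ),
        ENNReal.ofReal (Real.exp (-τ * t) * |f t|)) < ⊤) :
    (∫ t in Set.Ioi (0 : ℝ), Real.exp (-τ * t) *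
        (((1 + α) / 2) * f t + ((1 - α) / 2) * f (t - 2)
          - (1 / 2) * ∫ u in (t - 2)..t, f u))
      = ((1 / 2) * (1 + Real.exp (-2 * τ)
            + (α - 1 / τ) * (1 - Real.exp (-2 * τ))))
          * ∫ t in Set.Ioi (0 : ℝ), Real.exp (-τ * t) * f t := by
  have hf : LaplaceIntegrable f τ :=
    laplaceIntegrable_of_lintegral_lt_top hf_meas.aestronglyMeasurable hf_int
  have hdelay : LaplaceIntegrable (fun t => f (t - 2)) τ := hf.comp_sub hf0 zero_le_two
  have hk0 : ∀ t < 0, (Ioc 0 2).indicator (1 : ℝ → ℝ) t = 0 :=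
    fun t ht => indicator_of_notMem (fun h => (h.1.trans ht).false) _
  have hmemory : (fun t => ∫ u in t - 2..t, f u) = (Ioc 0 2).indicator 1 ⋆[mul ℝ ℝ] f :=
    funext fun t => (convolution_indicator_Ioc zero_le_two t).symm
  have hmemoryInt : LaplaceIntegrable (fun t => ∫ u in t - 2..t, f u) τ :=
    hmemory ▸ laplaceIntegrable_indicator_Ioc.convolution hf hk0 hf0
  change laplace (fun t => _ * f t + _ * f (t - 2) - _ * ∫ u in t - 2..t, f u) τ
    = _ * laplace f τ
  rw [laplace_sub ((hf.const_mul _).add (hdelay.const_mul _)) (hmemoryInt.const_mul _),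
    laplace_add (hf.const_mul _) (hdelay.const_mul _), laplace_const_mul, laplace_const_mul,
    laplace_const_mul, laplace_comp_sub hf0 zero_le_two, hmemory,
    laplace_convolution laplaceIntegrable_indicator_Ioc hf hk0 hf0,
    laplace_indicator_Ioc hτ.ne' zero_le_two]
  field_simp
  ring

end
end

section
/- Let a > 0 and b > 0 be real numbers, and let k₁, k₂ ∈ ℝ. Suppose A, G, P ∈ ℝ satisfy A ≥ 0, G > 0, P ≥ 0, together with the two relations G + (k₂² − k₁²) A + (a k₂ + b) P = 0 and 2 k₂ A + a P = 0. Then k₁² + (k₂ + b/a)² > (b/a)². Consequently, the interior impedance boundary value problem has no eigenvalue k = k₁ + i k₂ with k₁ ≠ 0 lying in the closed disk k₁² + (k₂ + b/a)² ≤ (b/a)² off the imaginary axis. -/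
/-!
Eliminating the boundary term `P` between the two relations leaves
`G = A * (k₁² + (k₂ + b/a)² - (b/a)²)`; as `G > 0` and `A ≥ 0`, the second factor is positive.
-/

theorem eq_mul_disk_excess_of_green_relations {K : Type*} [Field K] {a b k₁ k₂ A G P : K}
    (ha : a ≠ 0)
    (h1 : G + (k₂ ^ 2 - k₁ ^ 2) * A + (a * k₂ + b) * P = 0)
    (h2 : 2 * k₂ * A + a * P = 0) :
    G = A * (k₁ ^ 2 + (k₂ + b / a) ^ 2 - (b / a) ^ 2) := by
  have hb : b = a * (b / a) := (mul_div_cancel₀ b ha).symm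
  rw [hb] at h1
  linear_combination h1 - (k₂ + b / a) * h2

theorem impedance_pole_free_disk_general
    (a b : ℝ) (ha : 0 < a) (k₁ k₂ : ℝ)
    (A G P : ℝ) (hA : 0 ≤ A) (hG : 0 < G)
    (h1 : G + (k₂ ^ 2 - k₁ ^ 2) * A + (a * k₂ + b) * P = 0)
    (h2 : 2 * k₂ * A + a * P = 0) :
    k₁ ^ 2 + (k₂ + b / a) ^ 2 > (b / a) ^ 2 := by
  rw [eq_mul_disk_excess_of_green_relations ha.ne' h1 h2] at hG
  exact sub_pos.mp (pos_of_mul_pos_right hG hA)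

theorem impedance_pole_free_disk
    (a b : ℝ) (ha : 0 < a) (hb : 0 < b) (k₁ k₂ : ℝ)
    (A G P : ℝ) (hA : 0 ≤ A) (hG : 0 < G) (hP : 0 ≤ P)
    (h1 : G + (k₂ ^ 2 - k₁ ^ 2) * A + (a * k₂ + b) * P = 0)
    (h2 : 2 * k₂ * A + a * P = 0) :
    k₁ ^ 2 + (k₂ + b / a) ^ 2 > (b / a) ^ 2 :=
  impedance_pole_free_disk_general a b ha k₁ k₂ A G P hA hG h1 h2
end
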